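/- arXiv:2008.04784 — 2 statements merged into one kernel-verified Lean document; each statement's English description precedes it below -/
import Mathlib

section
/- Let G be a finite group and H a subgroup with H < G such that H is normal in G and the interval I[H,G] in the subgroup lattice of G is isomorphic to M_n (i.e., the set S of subgroups K with H < K < G has exactly n elements, and any two distinct members K, K' of S satisfy K ⊓ K' = H and K ⊔ K' = G). If the index [G : H] is strictly less than 2n, then there exists a prime p such that n = p + 1 and the quotient group G/H is isomorphic to the dihedral group D_{2p} of order 2p. -/
/-! In `G ⧸ H` the proper nontrivial subgroups pairwise intersect trivially and generate the
whole group, so each of them is an atom, hence of prime order. Their non-identity elements are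
disjoint and there are more than `|G ⧸ H| / 2` of them, so at least two have order `2`.
Their generators `x`, `y` are involutions and `x` inverts `a = x * y`; the subgroup `⟨a⟩` is again
an atom, of prime order `p`, and complementary to `⟨x⟩`, which makes `G ⧸ H` dihedral of order
`2 p`. Every element outside `⟨a⟩` is then an involution generating its own atom, so there are
exactly `p + 1` atoms. -/

open Subgroup Set

theorem isAtom_of_pairwise_disjoint_Ioo {α : Type*} [Lattice α] [BoundedOrder α]
    (h : (Ioo (⊥ : α) ⊤).Pairwise Disjoint) {a : α} (ha : a ∈ Ioo ⊥ ⊤) : IsAtom a := by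
  refine ⟨ha.1.ne', fun b hba => by_contra fun hb => ?_⟩
  have hb' : b ∈ Ioo ⊥ ⊤ := ⟨bot_lt_iff_ne_bot.2 hb, hba.trans ha.2⟩
  exact hb (disjoint_self.1 ((h hb' ha hba.ne).mono_right hba.le))

section

variable {Q : Type*} [Group Q]

theorem inv_eq_self_of_sq_eq_one {x : Q} (hx : x ^ 2 = 1) : x⁻¹ = x :=
  inv_eq_of_mul_eq_one_left (by rwa [← sq])

theorem eq_one_or_eq_of_mem_zpowers {t u : Q} (ht : t ^ 2 = 1) (hu : u ∈ zpowers t) :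
    u = 1 ∨ u = t := by
  obtain ⟨k, rfl⟩ := mem_zpowers_iff.1 hu
  rcases Int.even_or_odd k with ⟨m, rfl⟩ | ⟨m, rfl⟩
  · left; rw [← two_mul, zpow_mul, zpow_two, ← sq, ht, one_zpow]
  · right; rw [zpow_add, zpow_mul, zpow_two, ← sq, ht, one_zpow, one_mul, zpow_one]

theorem conj_zpow_eq_inv {a x : Q} (hxa : x * a * x⁻¹ = a⁻¹) (k : ℤ) :
    x * a ^ k * x⁻¹ = (a ^ k)⁻¹ := by
  simpa [MulAut.conj_apply, hxa] using map_zpow (MulAut.conj x) a k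

theorem zpow_mul_eq_mul_inv {a x : Q} (hx : x ^ 2 = 1) (hxa : x * a * x⁻¹ = a⁻¹) (k : ℤ) :
    a ^ k * x = x * (a ^ k)⁻¹ := by
  rw [← conj_zpow_eq_inv hxa k, inv_eq_self_of_sq_eq_one hx, ← mul_assoc, ← mul_assoc, ← sq, hx,
    one_mul]

theorem mul_mul_inv_eq_inv {x y : Q} (hx : x ^ 2 = 1) (hy : y ^ 2 = 1) :
    x * (x * y) * x⁻¹ = (x * y)⁻¹ := by
  rw [mul_inv_rev, inv_eq_self_of_sq_eq_one hx, inv_eq_self_of_sq_eq_one hy, ← mul_assoc, ← sq,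
    hx, one_mul]

theorem notMem_zpowers_mul {x y : Q} (hx : x ^ 2 = 1) (hy : y ^ 2 = 1) (hx1 : x ≠ 1)
    (hy1 : y ≠ 1) : x ∉ zpowers (x * y) := by
  intro hxa
  have hcomm : Commute x (x * y) := by
    obtain ⟨k, hk⟩ := mem_zpowers_iff.1 hxa
    simpa only [hk] using Commute.zpow_self (x * y) k
  -- `x` both inverts and centralizes `x * y`
  have hinv : (x * y)⁻¹ = x * y := by
    rw [← mul_mul_inv_eq_inv hx hy, hcomm.eq, mul_inv_cancel_right]
  rcases eq_one_or_eq_of_mem_zpowers (by rwa [sq, ← inv_eq_iff_mul_eq_one]) hxa with h | h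
  · exact hx1 h
  · exact hy1 (left_eq_mul.1 h)

theorem sq_eq_one_of_notMem_zpowers {a x t : Q} (hx : x ^ 2 = 1) (hxa : x * a * x⁻¹ = a⁻¹)
    (hindex : (zpowers a).index = 2) (hxa' : x ∉ zpowers a) (ht : t ∉ zpowers a) :
    t ^ 2 = 1 := by
  obtain ⟨k, hk⟩ : ∃ k : ℤ, a ^ k = x⁻¹ * t := by
    rw [← mem_zpowers_iff, mul_mem_iff_of_index_two hindex, inv_mem_iff]; tauto
  obtain rfl : t = x * a ^ k := by rw [hk, mul_inv_cancel_left]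
  calc (x * a ^ k) ^ 2 = (x * a ^ k * x⁻¹) * x ^ 2 * a ^ k := by rw [sq, sq]; group
    _ = 1 := by rw [conj_zpow_eq_inv hxa, hx, mul_one, inv_mul_cancel]

namespace DihedralGroup

section Lift

variable {n : ℕ} [NeZero n]

theorem pow_val_add {a : Q} (ha : a ^ n = 1) (i j : ZMod n) :
    a ^ (i + j).val = a ^ i.val * a ^ j.val := by
  rw [ZMod.val_add, ← pow_eq_pow_mod _ ha, pow_add]

theorem pow_val_neg {a : Q} (ha : a ^ n = 1) (i : ZMod n) :
    a ^ (-i).val = (a ^ i.val)⁻¹ :=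
  eq_inv_of_mul_eq_one_left (by rw [← pow_val_add ha, neg_add_cancel, ZMod.val_zero, pow_zero])

def lift (a x : Q) (ha : a ^ n = 1) (hx : x ^ 2 = 1) (hxa : x * a * x⁻¹ = a⁻¹) :
    DihedralGroup n →* Q where
  toFun
    | r i => a ^ i.val
    | sr i => x * a ^ i.val
  map_one' := show a ^ (0 : ZMod n).val = 1 by rw [ZMod.val_zero, pow_zero]
  map_mul' := by
    have hcomm (i : ZMod n) : a ^ i.val * x = x * (a ^ i.val)⁻¹ := by
      exact_mod_cast zpow_mul_eq_mul_inv hx hxa i.val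
    rintro (i | i) (j | j) <;>
      simp only [r_mul_r, r_mul_sr, sr_mul_r, sr_mul_sr, sub_eq_neg_add, pow_val_add ha,
        pow_val_neg ha]
    · rw [← mul_assoc (a ^ i.val), hcomm, mul_assoc]
    · rw [mul_assoc]
    · rw [mul_assoc, ← mul_assoc (a ^ i.val), hcomm, ← mul_assoc, ← mul_assoc, ← sq, hx,
        one_mul]

theorem lift_r_one {a x : Q} (ha : a ^ n = 1) (hx : x ^ 2 = 1)
    (hxa : x * a * x⁻¹ = a⁻¹) : lift a x ha hx hxa (r 1) = a := by
  show a ^ (1 : ZMod n).val = a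
  rw [ZMod.val_one_eq_one_mod, ← pow_eq_pow_mod 1 ha, pow_one]

end Lift

theorem nonempty_mulEquiv_of_zpowers_sup_eq_top [Finite Q] {a x : Q} (hx : x ^ 2 = 1)
    (hxa : x * a * x⁻¹ = a⁻¹) (hxa' : x ∉ zpowers a) (hgen : zpowers x ⊔ zpowers a = ⊤) :
    Nonempty (Q ≃* DihedralGroup (orderOf a)) := by
  have : NeZero (orderOf a) := ⟨(orderOf_pos a).ne'⟩
  set φ := lift a x (pow_orderOf_eq_one a) hx hxa
  have hsurj : Function.Surjective φ := by
    rw [← MonoidHom.range_eq_top, eq_top_iff, ← hgen]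
    refine sup_le (zpowers_le.2 ⟨sr 0, ?_⟩) (zpowers_le.2 ⟨r 1, lift_r_one _ hx hxa⟩)
    show x * a ^ (0 : ZMod (orderOf a)).val = x
    rw [ZMod.val_zero, pow_zero, mul_one]
  -- `zpowers a` is proper, so `Q` has at least `2 * orderOf a` elements
  have hcard : Nat.card (DihedralGroup (orderOf a)) ≤ Nat.card Q := by
    have hindex := one_lt_index_of_ne_top fun h : zpowers a = ⊤ => hxa' (h ▸ mem_top x)
    rw [nat_card, ← card_mul_index (zpowers a), Nat.card_zpowers, mul_comm 2]
    exact Nat.mul_le_mul_left _ hindex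
  exact ⟨(MulEquiv.ofBijective φ (hsurj.bijective_of_nat_card_le hcard)).symm⟩

end DihedralGroup

namespace Subgroup

theorem zpowers_eq_of_isAtom {K : Subgroup Q} (hK : IsAtom K) {x : Q} (hx : x ∈ K)
    (hx1 : x ≠ 1) : zpowers x = K :=
  (hK.le_iff.1 (zpowers_le.2 hx)).resolve_left (zpowers_ne_bot.2 hx1)

theorem prime_card_of_isAtom [Finite Q] {K : Subgroup Q} (hK : IsAtom K) :
    (Nat.card K).Prime := by
  have hq : (Nat.card K).minFac.Prime := Nat.minFac_prime (by simpa using hK.1)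
  have := Fact.mk hq
  obtain ⟨g, hg⟩ := exists_prime_orderOf_dvd_card' (G := K) _ (Nat.minFac_dvd _)
  have hg1 : (g : Q) ≠ 1 := by
    rw [Ne, ← orderOf_eq_one_iff, orderOf_coe, hg]; exact hq.ne_one
  rwa [← zpowers_eq_of_isAtom hK g.2 hg1, Nat.card_zpowers, orderOf_coe, hg]

theorem exists_sq_eq_one_of_isAtom_of_card_eq_two {K : Subgroup Q} (hK : IsAtom K)
    (h2 : Nat.card K = 2) : ∃ x : Q, x ^ 2 = 1 ∧ zpowers x = K := by
  obtain ⟨x, hxK, hx1⟩ := K.bot_or_exists_ne_one.resolve_left hK.1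
  have hxK' := zpowers_eq_of_isAtom hK hxK hx1
  refine ⟨x, ?_, hxK'⟩
  rw [← h2, ← hxK', Nat.card_zpowers]
  exact pow_orderOf_eq_one x

theorem sum_card_sub_one_le [Finite Q] {F : Finset (Subgroup Q)}
    (hF : (F : Set (Subgroup Q)).Pairwise Disjoint) :
    ∑ K ∈ F, (Nat.card K - 1) ≤ Nat.card Q - 1 := by
  classical
  have := Fintype.ofFinite Q
  let punctured : Subgroup Q → Finset Q := fun K => (K : Set Q).toFinset.erase 1
  have hcard K : (punctured K).card = Nat.card K - 1 := by
    rw [Finset.card_erase_of_mem (by simp), ← Nat.card_eq_card_toFinset]; rfl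
  have hdisj : (F : Set (Subgroup Q)).PairwiseDisjoint punctured := by
    intro K hK K' hK' hne
    refine Finset.disjoint_left.2 fun g hg hg' => ?_
    simp only [punctured, Finset.mem_erase, mem_toFinset, SetLike.mem_coe] at hg hg'
    exact hg.1 ((disjoint_iff.1 (hF hK hK' hne)).le ⟨hg.2, hg'.2⟩)
  calc ∑ K ∈ F, (Nat.card K - 1) = (F.biUnion punctured).card := by
        rw [Finset.card_biUnion hdisj]; exact Finset.sum_congr rfl fun K _ => (hcard K).symm
    _ ≤ (Finset.univ.erase (1 : Q)).card :=
        Finset.card_le_card fun g hg => by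
          obtain ⟨K, -, hg⟩ := Finset.mem_biUnion.1 hg
          exact Finset.mem_erase.2 ⟨(Finset.mem_erase.1 hg).1, Finset.mem_univ g⟩
    _ = Nat.card Q - 1 := by
        rw [Finset.card_erase_of_mem (Finset.mem_univ 1), Finset.card_univ,
          Nat.card_eq_fintype_card]

theorem exists_ne_card_eq_two [Finite Q] (hdisj : (Ioo ⊥ ⊤ : Set (Subgroup Q)).Pairwise Disjoint)
    (hlt : Nat.card Q < 2 * (Ioo ⊥ ⊤ : Set (Subgroup Q)).ncard) :
    ∃ K : Subgroup Q, K ∈ Ioo ⊥ ⊤ ∧ ∃ K' : Subgroup Q, K' ∈ Ioo ⊥ ⊤ ∧ K ≠ K' ∧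
      Nat.card K = 2 ∧ Nat.card K' = 2 := by
  classical
  set F := (Ioo ⊥ ⊤ : Set (Subgroup Q)).toFinite.toFinset
  have hF : (Ioo ⊥ ⊤ : Set (Subgroup Q)).ncard = F.card := ncard_eq_toFinset_card _ _
  -- a member of prime order other than 2 contributes at least two non-identity elements
  have hlow : ∀ K : Subgroup Q, K ∈ F → 2 ≤ (Nat.card K - 1) + if Nat.card K = 2 then 1 else 0 := by
    intro K hK
    have := (prime_card_of_isAtom (isAtom_of_pairwise_disjoint_Ioo hdisj
      ((Finite.mem_toFinset _).1 hK))).two_le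
    split_ifs <;> omega
  have hsum := Finset.sum_le_sum hlow
  rw [Finset.sum_const, smul_eq_mul, Finset.sum_add_distrib, Finset.sum_boole, Nat.cast_id] at hsum
  have h2 : 1 < (F.filter fun K : Subgroup Q => Nat.card K = 2).card := by
    have := sum_card_sub_one_le (F := F) (by simpa [F] using hdisj)
    have := Nat.card_pos (α := Q)
    omega
  obtain ⟨K, hK, K', hK', hne⟩ := Finset.one_lt_card.1 h2
  simp only [Finset.mem_filter, Finite.mem_toFinset, F] at hK hK'
  exact ⟨K, hK.1, K', hK'.1, hne, hK.2, hK'.2⟩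

theorem ncard_Ioo_eq_of_sq_eq_one [Finite Q]
    (hdisj : (Ioo ⊥ ⊤ : Set (Subgroup Q)).Pairwise Disjoint) {N : Subgroup Q}
    (hN : N ∈ Ioo ⊥ ⊤) (hsq : ∀ t ∉ N, t ^ 2 = 1) (hQ : 2 < Nat.card Q) :
    (Ioo ⊥ ⊤ : Set (Subgroup Q)).ncard + Nat.card N = Nat.card Q + 1 := by
  have hne_one {t} (ht : t ∉ N) : t ≠ 1 := fun h => ht (h ▸ N.one_mem)
  -- the members other than `N` are exactly the subgroups `{1, t}` with `t ∉ N`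
  have himage : Ioo ⊥ ⊤ \ {N} = zpowers '' (N : Set Q)ᶜ := by
    ext K
    constructor
    · rintro ⟨hK, hKN : K ≠ N⟩
      have hK' := isAtom_of_pairwise_disjoint_Ioo hdisj hK
      obtain ⟨t, htK, ht1⟩ := K.bot_or_exists_ne_one.resolve_left hK'.1
      refine ⟨t, fun htN => ht1 ?_, zpowers_eq_of_isAtom hK' htK ht1⟩
      exact (disjoint_iff.1 (hdisj hK hN hKN)).le ⟨htK, htN⟩
    · rintro ⟨t, htN : t ∉ N, rfl⟩
      have hcard : Nat.card (zpowers t) = 2 := by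
        rw [Nat.card_zpowers, orderOf_eq_prime (hsq t htN) (hne_one htN)]
      refine ⟨⟨bot_lt_iff_ne_bot.2 (zpowers_ne_bot.2 (hne_one htN)), ?_⟩, ?_⟩
      · exact lt_top_iff_ne_top.2 fun h => by rw [h, card_top] at hcard; omega
      · exact fun h : zpowers t = N => htN (h ▸ mem_zpowers t)
  have hinj : InjOn zpowers (N : Set Q)ᶜ := fun t ht t' ht' h =>
    ((eq_one_or_eq_of_mem_zpowers (hsq t ht) (h ▸ mem_zpowers t')).resolve_left
      (hne_one ht')).symm
  rw [← ncard_sdiff_singleton_add_one hN, himage, hinj.ncard_image, ncard_compl,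
    ← Nat.card_coe_set_eq (N : Set Q), SetLike.coe_sort_coe]
  have := card_le_of_le (le_top : N ≤ ⊤)
  rw [card_top] at this
  omega

theorem exists_prime_mulEquiv_dihedralGroup_of_pairwise_isCompl [Finite Q]
    (hM : (Ioo ⊥ ⊤ : Set (Subgroup Q)).Pairwise IsCompl)
    (hlt : Nat.card Q < 2 * (Ioo ⊥ ⊤ : Set (Subgroup Q)).ncard) :
    ∃ p : ℕ, p.Prime ∧ (Ioo ⊥ ⊤ : Set (Subgroup Q)).ncard = p + 1 ∧
      Nonempty (Q ≃* DihedralGroup p) := by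
  have hdisj := hM.mono' fun _ _ h => h.disjoint
  have hatom {K : Subgroup Q} := @isAtom_of_pairwise_disjoint_Ioo _ _ _ hdisj K
  obtain ⟨K, hK, K', hK', hne, hK2, hK'2⟩ := exists_ne_card_eq_two hdisj hlt
  obtain ⟨x, hx, rfl⟩ := exists_sq_eq_one_of_isAtom_of_card_eq_two (hatom hK) hK2
  obtain ⟨y, hy, rfl⟩ := exists_sq_eq_one_of_isAtom_of_card_eq_two (hatom hK') hK'2
  have hx1 : x ≠ 1 := zpowers_ne_bot.1 hK.1.ne'
  have hxa := mul_mul_inv_eq_inv hx hy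
  have hxa' := notMem_zpowers_mul hx hy hx1 (zpowers_ne_bot.1 hK'.1.ne')
  have hN : zpowers (x * y) ∈ Ioo ⊥ ⊤ := by
    refine ⟨bot_lt_iff_ne_bot.2 (zpowers_ne_bot.2 fun h => hne ?_), ?_⟩
    · rw [← inv_eq_self_of_sq_eq_one hx, eq_inv_of_mul_eq_one_right h]
    · exact lt_top_iff_ne_top.2 fun h => hxa' (h ▸ mem_top x)
  obtain ⟨e⟩ := DihedralGroup.nonempty_mulEquiv_of_zpowers_sup_eq_top hx hxa hxa'
    (hM hK hN fun h => hxa' (h ▸ mem_zpowers x)).sup_eq_top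
  have hp : (orderOf (x * y)).Prime := Nat.card_zpowers (x * y) ▸ prime_card_of_isAtom (hatom hN)
  have hcard : Nat.card Q = 2 * orderOf (x * y) := by
    rw [Nat.card_congr e.toEquiv, DihedralGroup.nat_card]
  have hindex : (zpowers (x * y)).index = 2 := by
    have := card_mul_index (zpowers (x * y))
    rw [hcard, Nat.card_zpowers, mul_comm] at this
    exact Nat.eq_of_mul_eq_mul_right hp.pos this
  have hcount := ncard_Ioo_eq_of_sq_eq_one hdisj hN
    (fun t => sq_eq_one_of_notMem_zpowers hx hxa hindex hxa') (by linarith [hp.two_le])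
  refine ⟨orderOf (x * y), hp, ?_, ⟨e⟩⟩
  rw [hcard, Nat.card_zpowers] at hcount
  omega

end Subgroup

end

namespace QuotientGroup

variable {G : Type*} [Group G] (H : Subgroup G) [H.Normal]

theorem image_comap_mk'_Ioo : comap (mk' H) '' Ioo ⊥ ⊤ = Ioo H ⊤ := by
  let e : Subgroup (G ⧸ H) ↪o Subgroup G :=
    OrderEmbedding.ofMapLEIff (comap (mk' H)) fun _ _ =>
      comap_le_comap_of_surjective (mk'_surjective H)
  have hrange : range e = Ici H := by
    ext K
    refine ⟨?_, fun hK => ⟨Subgroup.map (mk' H) K, by simpa [e] using hK⟩⟩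
    rintro ⟨L, rfl⟩
    exact le_comap_mk' H L
  have hbot : comap (mk' H) ⊥ = H := (MonoidHom.comap_bot _).trans (ker_mk' H)
  simpa only [e, OrderEmbedding.coe_ofMapLEIff, hbot, comap_top] using
    e.image_Ioo (hrange ▸ ordConnected_Ici) ⊥ ⊤

theorem pairwise_isCompl_Ioo
    (hM : (Ioo H ⊤).Pairwise fun K K' => K ⊓ K' = H ∧ K ⊔ K' = ⊤) :
    (Ioo ⊥ ⊤ : Set (Subgroup (G ⧸ H))).Pairwise IsCompl := by
  have hinj := comap_injective (mk'_surjective H)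
  rw [← image_comap_mk'_Ioo, hinj.injOn.pairwise_image] at hM
  refine hM.mono' fun K K' ⟨hinf, hsup⟩ => ⟨disjoint_iff.2 (hinj ?_), codisjoint_iff.2 (hinj ?_)⟩
  · rwa [comap_inf, MonoidHom.comap_bot, ker_mk']
  · rwa [← comap_sup_eq _ _ _ (mk'_surjective H), comap_top]

end QuotientGroup

theorem stmt_2_general {G : Type*} [Group G] [Fintype G] (H : Subgroup G) [H.Normal] (n : ℕ)
    (hcard : {K : Subgroup G | H < K ∧ K < ⊤}.ncard = n)
    (hMn : ∀ K K' : Subgroup G, K ∈ {K : Subgroup G | H < K ∧ K < ⊤} →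
      K' ∈ {K : Subgroup G | H < K ∧ K < ⊤} → K ≠ K' → K ⊓ K' = H ∧ K ⊔ K' = ⊤)
    (hindex : H.index < 2 * n) :
    ∃ p : ℕ, p.Prime ∧ n = p + 1 ∧ Nonempty ((G ⧸ H) ≃* DihedralGroup p) := by
  have hM := QuotientGroup.pairwise_isCompl_Ioo H fun K hK K' hK' => hMn K K' hK hK'
  have hn : (Ioo ⊥ ⊤ : Set (Subgroup (G ⧸ H))).ncard = n := by
    rw [← hcard, ← ncard_image_of_injective _ (comap_injective (QuotientGroup.mk'_surjective H)),
      QuotientGroup.image_comap_mk'_Ioo]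
    rfl
  rw [index_eq_card, ← hn] at hindex
  simpa only [hn] using exists_prime_mulEquiv_dihedralGroup_of_pairwise_isCompl hM hindex

/-- If `G` is a finite group, `H < G` a normal subgroup such that the interval `I[H,G]`
in the subgroup lattice is isomorphic to `M_n`, and `[G : H] < 2n`, then there is a
prime `p` with `n = p + 1` and `G/H ≅ D_{2p}`. -/
theorem stmt_2 {G : Type*} [Group G] [Fintype G] (H : Subgroup G) [H.Normal] (n : ℕ)
    (hHG : H < ⊤)
    (hcard : {K : Subgroup G | H < K ∧ K < ⊤}.ncard = n)
    (hMn : ∀ K K' : Subgroup G, K ∈ {K : Subgroup G | H < K ∧ K < ⊤} →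
      K' ∈ {K : Subgroup G | H < K ∧ K < ⊤} → K ≠ K' → K ⊓ K' = H ∧ K ⊔ K' = ⊤)
    (hindex : H.index < 2 * n) :
    ∃ p : ℕ, p.Prime ∧ n = p + 1 ∧ Nonempty ((G ⧸ H) ≃* DihedralGroup p) :=
  stmt_2_general H n hcard hMn hindex
end

section
/- Let G be a finite group and H a subgroup with H < G, and suppose the set S of subgroups K with H < K < G has exactly n elements (n ≥ 2) with any two distinct members K, K' of S satisfying K ⊓ K' = H. If the index [G : H] is strictly less than 2n, then there exist two distinct subgroups K₁, K₂ ∈ S each of which contains H with relative index [K₁ : H] = [K₂ : H] = 2. -/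
/-!
For `H ≤ K` the set `K \ H` has `|H| * ([K : H] - 1)` elements. Since distinct intermediate
subgroups meet in `H`, these sets are pairwise disjoint subsets of `G \ H`, so
`∑ ([K : H] - 1) ≤ [G : H] - 1`. Every term is at least `1`, and at least `2` unless
`[K : H] = 2`; with `n` terms and `[G : H] < 2n` this forces two terms equal to `1`.
-/

open Finset

theorem Finset.two_mul_card_le_sum_sub_one_add_card_filter_eq_two {ι : Type*} (s : Finset ι)
    (f : ι → ℕ) (hf : ∀ i ∈ s, 2 ≤ f i) :
    2 * #s ≤ ∑ i ∈ s, (f i - 1) + #{i ∈ s | f i = 2} := by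
  rw [card_filter, ← sum_add_distrib, mul_comm, ← smul_eq_mul, ← sum_const]
  refine sum_le_sum fun i hi => ?_
  have := hf i hi
  split_ifs <;> omega

namespace Subgroup

variable {G : Type*} [Group G] {H K : Subgroup G}

theorem card_mul_relIndex (h : H ≤ K) : Nat.card H * H.relIndex K = Nat.card K := by
  rw [← Nat.card_congr (subgroupOfEquivOfLe h).toEquiv]
  exact card_mul_index _

theorem one_lt_relIndex_of_lt [Finite G] (h : H < K) : 1 < H.relIndex K := by
  have h0 : H.relIndex K ≠ 0 := index_ne_zero_of_finite
  have h1 : H.relIndex K ≠ 1 := fun h1 => h.not_ge (relIndex_eq_one.mp h1)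
  omega

theorem ncard_sdiff_of_le [Finite G] (h : H ≤ K) :
    ((K : Set G) \ H).ncard = Nat.card H * (H.relIndex K - 1) := by
  rw [Set.ncard_sdiff h, Nat.mul_sub_one, card_mul_relIndex h]
  simp only [← Nat.card_coe_set_eq, SetLike.coe_sort_coe]

theorem sum_relIndex_sub_one_le_index_sub_one [Finite G] {S : Finset (Subgroup G)}
    (hle : ∀ K ∈ S, H ≤ K)
    (hinf : (S : Set (Subgroup G)).Pairwise fun K K' => K ⊓ K' ≤ H) :
    ∑ K ∈ S, (H.relIndex K - 1) ≤ H.index - 1 := by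
  have hdisj : (S : Set (Subgroup G)).PairwiseDisjoint fun K => (K : Set G) \ H :=
    fun K hK K' hK' hne =>
      Set.disjoint_left.2 fun x hx hx' => hx.2 (hinf hK hK' hne ⟨hx.1, hx'.1⟩)
  have hsub : (⋃ K ∈ (S : Set (Subgroup G)), (K : Set G) \ H) ⊆ (H : Set G)ᶜ :=
    Set.iUnion₂_subset fun K _ => Set.sdiff_subset_compl _ _
  refine Nat.le_of_mul_le_mul_left ?_ (Nat.card_pos (α := H))
  calc Nat.card H * ∑ K ∈ S, (H.relIndex K - 1)
      = ∑ K ∈ S, ((K : Set G) \ H).ncard := by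
        rw [mul_sum]; exact sum_congr rfl fun K hK => (ncard_sdiff_of_le (hle K hK)).symm
    _ = (⋃ K ∈ (S : Set (Subgroup G)), (K : Set G) \ H).ncard := by
        rw [S.finite_toSet.ncard_biUnion (fun _ _ => Set.toFinite _) hdisj, finsum_mem_coe_finset]
    _ ≤ ((H : Set G)ᶜ).ncard := Set.ncard_le_ncard hsub
    _ = Nat.card H * (H.index - 1) := by
        rw [Set.ncard_compl, Nat.mul_sub_one, card_mul_index]
        simp only [← Nat.card_coe_set_eq, SetLike.coe_sort_coe]

end Subgroup

theorem stmt_3_general {G : Type*} [Group G] [Fintype G] (H : Subgroup G) (n : ℕ)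
    (hcard : {K : Subgroup G | H < K ∧ K < ⊤}.ncard = n)
    (hmeet : ∀ K K' : Subgroup G, K ∈ {K : Subgroup G | H < K ∧ K < ⊤} →
      K' ∈ {K : Subgroup G | H < K ∧ K < ⊤} → K ≠ K' → K ⊓ K' = H)
    (hindex : H.index < 2 * n) :
    ∃ K₁ K₂ : Subgroup G,
      K₁ ∈ {K : Subgroup G | H < K ∧ K < ⊤} ∧
      K₂ ∈ {K : Subgroup G | H < K ∧ K < ⊤} ∧
      K₁ ≠ K₂ ∧ H.relIndex K₁ = 2 ∧ H.relIndex K₂ = 2 := by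
  set S := (Set.toFinite {K : Subgroup G | H < K ∧ K < ⊤}).toFinset
  have hS : #S = n := by rw [← hcard, Set.ncard_eq_toFinset_card]
  have hmemS : ∀ K, K ∈ S ↔ H < K ∧ K < ⊤ := fun K => Set.Finite.mem_toFinset _
  have hsum : ∑ K ∈ S, (H.relIndex K - 1) ≤ H.index - 1 :=
    Subgroup.sum_relIndex_sub_one_le_index_sub_one (fun K hK => ((hmemS K).1 hK).1.le)
      fun K hK K' hK' hne => (hmeet K K' ((hmemS K).1 hK) ((hmemS K').1 hK') hne).le
  have hcount := S.two_mul_card_le_sum_sub_one_add_card_filter_eq_two (H.relIndex ·)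
    fun K hK => Subgroup.one_lt_relIndex_of_lt ((hmemS K).1 hK).1
  have htwo : 1 < #{K ∈ S | H.relIndex K = 2} := by omega
  obtain ⟨K₁, hK₁, K₂, hK₂, hne⟩ := one_lt_card.1 htwo
  rw [mem_filter, hmemS] at hK₁ hK₂
  exact ⟨K₁, K₂, hK₁.1, hK₂.1, hne, hK₁.2, hK₂.2⟩

/-- If `G` is a finite group, `H < G` a subgroup, the set `S` of subgroups strictly
between `H` and `G` has exactly `n ≥ 2` elements with any two distinct members meeting
in `H`, and `[G : H] < 2n`, then there are two distinct members `K₁, K₂` of `S` with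
relative index `[K₁ : H] = [K₂ : H] = 2`. -/
theorem stmt_3 {G : Type*} [Group G] [Fintype G] (H : Subgroup G) (n : ℕ)
    (hHG : H < ⊤) (hn : 2 ≤ n)
    (hcard : {K : Subgroup G | H < K ∧ K < ⊤}.ncard = n)
    (hmeet : ∀ K K' : Subgroup G, K ∈ {K : Subgroup G | H < K ∧ K < ⊤} →
      K' ∈ {K : Subgroup G | H < K ∧ K < ⊤} → K ≠ K' → K ⊓ K' = H)
    (hindex : H.index < 2 * n) :
    ∃ K₁ K₂ : Subgroup G,
      K₁ ∈ {K : Subgroup G | H < K ∧ K < ⊤} ∧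
      K₂ ∈ {K : Subgroup G | H < K ∧ K < ⊤} ∧
      K₁ ≠ K₂ ∧ H.relIndex K₁ = 2 ∧ H.relIndex K₂ = 2 :=
  stmt_3_general H n hcard hmeet hindex
end
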